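/- arXiv:1707.07597 — 3 statements merged into one kernel-verified Lean document; each statement's English description precedes it below -/
import Mathlib

section
/- Let α > 0 and let u, a, b be as in the Hadamard–Gronwall inequality, with a additionally nondecreasing on [1,T). If u(t) ≤ a(t) + b(t) ∫₁ᵗ (log(t/s))^{α-1} u(s) ds/s for all t ∈ [1,T), then u(t) ≤ a(t) E_α(b(t) Γ(α) (log t)^α) for all t ∈ [1,T). -/
/-!
The substitution `s = eʸ` turns the Hadamard integral `∫₁ᵗ (log (t/s))^(α-1) u(s) ds/s` into the
Riemann–Liouville integral `∫₀ˣ (x-y)^(α-1) u(eʸ) dy` with `x = log t`, and monotonicity of `a` and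
`b` lets us freeze the coefficients at `t`, leaving the Gronwall inequality
`U(x) ≤ A + B ∫₀ˣ (x-y)^(α-1) U(y) dy` with constant `A`, `B`. Since the Beta integral sends
`y^(kα)` to `Γ(α)Γ(kα+1)/Γ((k+1)α+1)·x^((k+1)α)`, iterating it `n` times from `U ≤ max U` bounds
`U(x)` by `A` times the `n`-th partial sum of `E_α(BΓ(α)x^α)` plus `max U` times its `n`-th term.
That term tends to zero because the series converges, by the ratio test and the log-convexity
bound `Γ(y)(y-1)^α ≤ Γ(y+α)`.
-/

open Real MeasureTheory Set Filter Topology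

theorem integral_rpow_mul_one_sub_rpow {p q : ℝ} (hp : 0 < p) (hq : 0 < q) :
    ∫ z in (0:ℝ)..1, z ^ (p - 1) * (1 - z) ^ (q - 1) = Gamma p * Gamma q / Gamma (p + q) := by
  have hc := Complex.Gamma_mul_Gamma_eq_betaIntegral (s := (p:ℂ)) (t := (q:ℂ))
    (by simpa using hp) (by simpa using hq)
  have hbeta : Complex.betaIntegral p q
      = ((∫ z in (0:ℝ)..1, z ^ (p - 1) * (1 - z) ^ (q - 1) : ℝ) : ℂ) := by
    rw [Complex.betaIntegral, ← intervalIntegral.integral_ofReal]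
    refine intervalIntegral.integral_congr fun z hz => ?_
    rw [uIcc_of_le zero_le_one] at hz
    push_cast
    rw [Complex.ofReal_cpow hz.1, Complex.ofReal_cpow (sub_nonneg.2 hz.2)]
    push_cast
    ring
  rw [hbeta, Complex.Gamma_ofReal, Complex.Gamma_ofReal, ← Complex.ofReal_add,
    Complex.Gamma_ofReal, ← Complex.ofReal_mul, ← Complex.ofReal_mul, Complex.ofReal_inj] at hc
  rw [hc, mul_div_cancel_left₀ _ (Gamma_pos_of_pos (add_pos hp hq)).ne']

/-- `Γ(α)` times the Riemann–Liouville fractional integral of order `α` of `f`, based at `0`. -/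
noncomputable def rlIntegral (α : ℝ) (f : ℝ → ℝ) (x : ℝ) : ℝ :=
  ∫ y in (0:ℝ)..x, (x - y) ^ (α - 1) * f y

section rlIntegral

variable {α x : ℝ} {f g : ℝ → ℝ}

theorem intervalIntegrable_rpow_sub_mul (hα : 0 < α) (hx : 0 ≤ x)
    (hf : ContinuousOn f (Icc 0 x)) :
    IntervalIntegrable (fun y => (x - y) ^ (α - 1) * f y) volume 0 x := by
  have hkernel : IntervalIntegrable (fun y : ℝ => (x - y) ^ (α - 1)) volume 0 x := by
    simpa using ((intervalIntegral.intervalIntegrable_rpow' (a := 0) (b := x)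
      (r := α - 1) (by linarith)).comp_sub_left x).symm
  exact hkernel.mul_continuousOn (by rwa [uIcc_of_le hx])

theorem rlIntegral_mono (hα : 0 < α) (hx : 0 ≤ x) (hf : ContinuousOn f (Icc 0 x))
    (hg : ContinuousOn g (Icc 0 x)) (hfg : ∀ y ∈ Icc 0 x, f y ≤ g y) :
    rlIntegral α f x ≤ rlIntegral α g x :=
  intervalIntegral.integral_mono_on hx (intervalIntegrable_rpow_sub_mul hα hx hf)
    (intervalIntegrable_rpow_sub_mul hα hx hg) fun y hy =>
      mul_le_mul_of_nonneg_left (hfg y hy) (rpow_nonneg (sub_nonneg.2 hy.2) _)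

theorem rlIntegral_add (hα : 0 < α) (hx : 0 ≤ x) (hf : ContinuousOn f (Icc 0 x))
    (hg : ContinuousOn g (Icc 0 x)) :
    rlIntegral α (fun y => f y + g y) x = rlIntegral α f x + rlIntegral α g x := by
  simp only [rlIntegral, mul_add]
  exact intervalIntegral.integral_add (intervalIntegrable_rpow_sub_mul hα hx hf)
    (intervalIntegrable_rpow_sub_mul hα hx hg)

theorem rlIntegral_const_mul (c : ℝ) :
    rlIntegral α (fun y => c * f y) x = c * rlIntegral α f x := by
  simp only [rlIntegral, mul_left_comm _ c, intervalIntegral.integral_const_mul]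

theorem rlIntegral_finsetSum {ι : Type*} (s : Finset ι) {f : ι → ℝ → ℝ} (hα : 0 < α)
    (hx : 0 ≤ x) (hf : ∀ i ∈ s, ContinuousOn (f i) (Icc 0 x)) :
    rlIntegral α (fun y => ∑ i ∈ s, f i y) x = ∑ i ∈ s, rlIntegral α (f i) x := by
  simp only [rlIntegral, Finset.mul_sum]
  exact intervalIntegral.integral_finsetSum fun i hi =>
    intervalIntegrable_rpow_sub_mul hα hx (hf i hi)

theorem rlIntegral_rpow {p : ℝ} (hα : 0 < α) (hp : 0 ≤ p) (hx : 0 ≤ x) :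
    rlIntegral α (· ^ p) x = Gamma α * Gamma (p + 1) / Gamma (α + p + 1) * x ^ (α + p) := by
  rcases hx.eq_or_lt with rfl | hx
  · rw [rlIntegral, intervalIntegral.integral_same, zero_rpow (by positivity), mul_zero]
  -- the substitution `y = x z` turns the integral into a Beta integral
  have hscale : rlIntegral α (· ^ p) x
      = x * ∫ z in (0:ℝ)..1, x ^ (α - 1 + p) * (z ^ (p + 1 - 1) * (1 - z) ^ (α - 1)) := by
    have := intervalIntegral.smul_integral_comp_mul_left (fun y => (x - y) ^ (α - 1) * y ^ p) x
      (a := 0) (b := 1)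
    rw [mul_zero, mul_one, smul_eq_mul] at this
    rw [rlIntegral, ← this]
    congr 1
    refine intervalIntegral.integral_congr fun z hz => ?_
    rw [uIcc_of_le zero_le_one] at hz
    rw [show x - x * z = x * (1 - z) by ring, mul_rpow hx.le (sub_nonneg.2 hz.2),
      mul_rpow hx.le hz.1, rpow_add hx, add_sub_cancel_right]
    ring
  rw [hscale, intervalIntegral.integral_const_mul,
    integral_rpow_mul_one_sub_rpow (by linarith) hα, ← mul_assoc, ← rpow_one_add' hx.le
      (by linarith), add_comm (p + 1) α, ← add_assoc]
  ring_nf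

end rlIntegral

theorem Gamma_mul_sub_one_rpow_le_Gamma_add {α y : ℝ} (hα : 0 < α) (hy : 1 < y) :
    Gamma y * (y - 1) ^ α ≤ Gamma (y + α) := by
  have hy1 : 0 < y - 1 := sub_pos.2 hy
  have hΓy : 0 < Gamma y := Gamma_pos_of_pos (by linarith)
  -- slopes of the convex function `log ∘ Γ`: the one on `[y-1, y]` is `log (y-1)`
  have hslope := convexOn_log_Gamma.slope_mono_adjacent (x := y - 1) (y := y) (z := y + α)
    (mem_Ioi.2 hy1) (mem_Ioi.2 (by linarith)) (by linarith) (by linarith)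
  have hrec : Gamma y = (y - 1) * Gamma (y - 1) := by
    simpa using Gamma_add_one hy1.ne'
  rw [sub_sub_cancel, div_one, add_sub_cancel_left, le_div_iff₀ hα] at hslope
  simp only [Function.comp_apply, hrec,
    log_mul hy1.ne' (Gamma_pos_of_pos hy1).ne', add_sub_cancel_right] at hslope
  rw [← log_le_log_iff (by positivity) (Gamma_pos_of_pos (by linarith)),
    log_mul hΓy.ne' (rpow_pos_of_pos hy1 α).ne', log_rpow hy1, hrec,
    log_mul hy1.ne' (Gamma_pos_of_pos hy1).ne']
  linarith

noncomputable def mittagLefflerTerm (α z : ℝ) (k : ℕ) : ℝ := z ^ k / Gamma (k * α + 1)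

theorem summable_mittagLefflerTerm {α : ℝ} (hα : 0 < α) (z : ℝ) :
    Summable (mittagLefflerTerm α z) := by
  refine summable_of_ratio_norm_eventually_le (r := 1 / 2) (by norm_num) ?_
  have hgrowth : Tendsto (fun k : ℕ => ((k : ℝ) * α) ^ α) atTop atTop :=
    (tendsto_rpow_atTop hα).comp (tendsto_natCast_atTop_atTop.atTop_mul_const hα)
  filter_upwards [hgrowth.eventually_ge_atTop (2 * |z|), eventually_ge_atTop 1] with k hk hk1
  have hkα : 0 < (k : ℝ) * α := mul_pos (by exact_mod_cast hk1) hα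
  have hΓ : 0 < Gamma (k * α + 1) := Gamma_pos_of_pos (by linarith)
  have hΓsucc : Gamma (k * α + 1) * (2 * |z|) ≤ Gamma ((k + 1 : ℕ) * α + 1) := by
    have := Gamma_mul_sub_one_rpow_le_Gamma_add hα (y := k * α + 1) (by linarith)
    rw [add_sub_cancel_right] at this
    rw [Nat.cast_succ, add_one_mul, add_right_comm]
    exact (mul_le_mul_of_nonneg_left hk hΓ.le).trans this
  have hΓsucc_pos : 0 < Gamma ((k + 1 : ℕ) * α + 1) := Gamma_pos_of_pos (by positivity)
  simp only [mittagLefflerTerm, norm_div, norm_pow, Real.norm_eq_abs, abs_mul, abs_pow,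
    abs_of_pos hΓ, abs_of_pos hΓsucc_pos, pow_succ]
  rw [div_le_iff₀ hΓsucc_pos]
  calc |z| ^ k * |z|
        = 1 / 2 * (|z| ^ k / Gamma (k * α + 1)) * (Gamma (k * α + 1) * (2 * |z|)) := by
          field_simp
    _ ≤ 1 / 2 * (|z| ^ k / Gamma (k * α + 1)) * Gamma ((k + 1 : ℕ) * α + 1) :=
          mul_le_mul_of_nonneg_left hΓsucc (by positivity)

section mittagLefflerTerm

variable {α c : ℝ}

@[simp]
theorem mittagLefflerTerm_zero (α z : ℝ) : mittagLefflerTerm α z 0 = 1 := by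
  simp [mittagLefflerTerm]

theorem continuous_mittagLefflerTerm_mul_rpow (hα : 0 ≤ α) (k : ℕ) :
    Continuous fun y => mittagLefflerTerm α (c * y ^ α) k :=
  ((continuous_const.mul (continuous_rpow_const hα)).pow k).div_const _

theorem mittagLefflerTerm_mul_rpow {y : ℝ} (hy : 0 ≤ y) (k : ℕ) :
    mittagLefflerTerm α (c * y ^ α) k = mittagLefflerTerm α c k * y ^ (k * α) := by
  rw [mittagLefflerTerm, mittagLefflerTerm, mul_pow, ← rpow_mul_natCast hy, mul_comm α]
  ring

theorem mul_rlIntegral_mittagLefflerTerm {B x : ℝ} (hα : 0 < α) (hx : 0 ≤ x) (k : ℕ) :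
    B * rlIntegral α (fun y => mittagLefflerTerm α (B * Gamma α * y ^ α) k) x
      = mittagLefflerTerm α (B * Gamma α * x ^ α) (k + 1) := by
  have hcongr : rlIntegral α (fun y => mittagLefflerTerm α (B * Gamma α * y ^ α) k) x
      = rlIntegral α (fun y => mittagLefflerTerm α (B * Gamma α) k * y ^ (k * α)) x := by
    refine intervalIntegral.integral_congr fun y hy => ?_
    rw [uIcc_of_le hx] at hy
    simp only [mittagLefflerTerm_mul_rpow hy.1]
  have hΓ : Gamma (k * α + 1) ≠ 0 := (Gamma_pos_of_pos (by positivity)).ne'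
  rw [hcongr, rlIntegral_const_mul, rlIntegral_rpow hα (by positivity) hx,
    mittagLefflerTerm_mul_rpow hx, mittagLefflerTerm, mittagLefflerTerm]
  push_cast
  rw [show α + k * α + 1 = (k + 1) * α + 1 by ring, show α + k * α = (k + 1) * α by ring]
  field_simp
  ring

end mittagLefflerTerm

section Gronwall

variable {α X A B M : ℝ} {U : ℝ → ℝ}

theorem le_sum_mittagLefflerTerm_add_remainder (hα : 0 < α) (hB : 0 ≤ B)
    (hU : ContinuousOn U (Icc 0 X)) (hUM : ∀ y ∈ Icc 0 X, U y ≤ M)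
    (H : ∀ x ∈ Icc 0 X, U x ≤ A + B * rlIntegral α U x) (n : ℕ) :
    ∀ x ∈ Icc 0 X, U x ≤ A * ∑ k ∈ Finset.range n, mittagLefflerTerm α (B * Gamma α * x ^ α) k
      + M * mittagLefflerTerm α (B * Gamma α * x ^ α) n := by
  induction n with
  | zero => simpa using hUM
  | succ n ih =>
    rintro x ⟨hx, hxX⟩
    set term : ℕ → ℝ → ℝ := fun k y => mittagLefflerTerm α (B * Gamma α * y ^ α) k
    have hterm : ∀ k, ContinuousOn (term k) (Icc 0 x) := fun k =>
      (continuous_mittagLefflerTerm_mul_rpow hα.le k).continuousOn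
    have hsumA : ContinuousOn (fun y => A * ∑ k ∈ Finset.range n, term k y) (Icc 0 x) :=
      continuousOn_const.mul (continuousOn_finsetSum _ fun k _ => hterm k)
    have htermM : ContinuousOn (fun y => M * term n y) (Icc 0 x) :=
      continuousOn_const.mul (hterm n)
    have hintegral : B * rlIntegral α (fun y => A * ∑ k ∈ Finset.range n, term k y
        + M * term n y) x = A * ∑ k ∈ Finset.range n, term (k + 1) x + M * term (n + 1) x := by
      rw [rlIntegral_add hα hx hsumA htermM, rlIntegral_const_mul, rlIntegral_const_mul,
        rlIntegral_finsetSum _ hα hx fun k _ => hterm k, mul_add, mul_left_comm,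
        mul_left_comm B M, Finset.mul_sum]
      simp only [term, mul_rlIntegral_mittagLefflerTerm hα hx]
    calc U x ≤ A + B * rlIntegral α U x := H x ⟨hx, hxX⟩
      _ ≤ A + B * rlIntegral α
            (fun y => A * ∑ k ∈ Finset.range n, term k y + M * term n y) x := by
        gcongr
        exact rlIntegral_mono hα hx (hU.mono (Icc_subset_Icc le_rfl hxX)) (hsumA.add htermM)
          fun y hy => ih y ⟨hy.1, hy.2.trans hxX⟩
      _ = A * ∑ k ∈ Finset.range (n + 1), term k x + M * term (n + 1) x := by
        rw [hintegral, Finset.sum_range_succ', mul_add A, add_assoc, add_left_comm]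
        simp [term]

theorem le_mul_tsum_mittagLefflerTerm (hα : 0 < α) (hX : 0 ≤ X) (hB : 0 ≤ B)
    (hU : ContinuousOn U (Icc 0 X)) (H : ∀ x ∈ Icc 0 X, U x ≤ A + B * rlIntegral α U x) :
    U X ≤ A * ∑' k, mittagLefflerTerm α (B * Gamma α * X ^ α) k := by
  obtain ⟨M, hM⟩ := isCompact_Icc.bddAbove_image hU
  have hsummable := summable_mittagLefflerTerm hα (B * Gamma α * X ^ α)
  have hlimit := ((hsummable.hasSum.tendsto_sum_nat).const_mul A).add
    (hsummable.tendsto_atTop_zero.const_mul M)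
  rw [mul_zero, add_zero] at hlimit
  exact ge_of_tendsto' hlimit fun n => le_sum_mittagLefflerTerm_add_remainder hα hB hU
    (fun y hy => hM (mem_image_of_mem U hy)) H n X ⟨hX, le_rfl⟩

end Gronwall

theorem integral_log_div_rpow_mul_div_eq_rlIntegral (α : ℝ) (u : ℝ → ℝ) {x : ℝ} (hx : 0 ≤ x) :
    ∫ s in (1:ℝ)..exp x, log (exp x / s) ^ (α - 1) * u s / s
      = rlIntegral α (fun y => u (exp y)) x := by
  have himage : exp '' Ioo 0 x = Ioo 1 (exp x) := by
    rw [image_exp_Ioo, exp_zero]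
  have hsubst := integral_image_eq_integral_abs_deriv_smul
    (measurableSet_Ioo (a := 0) (b := x)) (fun y _ => (hasDerivAt_exp y).hasDerivWithinAt)
    exp_injective.injOn (fun s => log (exp x / s) ^ (α - 1) * u s / s)
  rw [himage] at hsubst
  rw [rlIntegral, intervalIntegral.integral_of_le (one_le_exp hx),
    intervalIntegral.integral_of_le hx, integral_Ioc_eq_integral_Ioo,
    integral_Ioc_eq_integral_Ioo, hsubst]
  refine setIntegral_congr_fun measurableSet_Ioo fun y _ => ?_
  rw [smul_eq_mul, ← exp_sub, log_exp, abs_of_pos (exp_pos y)]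
  field_simp

theorem stmt_4_general (α T : ℝ) (hα : 0 < α)
    (u a b : ℝ → ℝ)
    (hu_cont : ContinuousOn u (Ico 1 T))
    (hu_nonneg : ∀ t ∈ Ico (1:ℝ) T, 0 ≤ u t)
    (hb_nonneg : ∀ t ∈ Ico (1:ℝ) T, 0 ≤ b t)
    (hb_mono : MonotoneOn b (Ico 1 T))
    (ha_mono : MonotoneOn a (Ico 1 T))
    (h : ∀ t ∈ Ico (1:ℝ) T,
      u t ≤ a t + b t * ∫ s in (1:ℝ)..t, (Real.log (t / s)) ^ (α - 1) * u s / s) :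
    ∀ t ∈ Ico (1:ℝ) T,
      u t ≤ a t * ∑' k : ℕ,
        (b t * Real.Gamma α * (Real.log t) ^ α) ^ k / Real.Gamma (k * α + 1) := by
  intro t ht
  have hlog : 0 ≤ log t := log_nonneg ht.1
  have hexp_le : ∀ y ∈ Icc 0 (log t), exp y ≤ t := fun y hy =>
    (exp_le_exp.2 hy.2).trans_eq (exp_log (by linarith [ht.1]))
  have hexp_mem : ∀ y ∈ Icc 0 (log t), exp y ∈ Ico 1 T := fun y hy =>
    ⟨one_le_exp hy.1, (hexp_le y hy).trans_lt ht.2⟩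
  have H : ∀ x ∈ Icc 0 (log t), u (exp x) ≤ a t + b t * rlIntegral α (fun y => u (exp y)) x := by
    intro x hx
    have hI : 0 ≤ rlIntegral α (fun y => u (exp y)) x :=
      intervalIntegral.integral_nonneg hx.1 fun y hy =>
        mul_nonneg (rpow_nonneg (sub_nonneg.2 hy.2) _)
          (hu_nonneg _ (hexp_mem y ⟨hy.1, hy.2.trans hx.2⟩))
    calc u (exp x) ≤ a (exp x) + b (exp x) * rlIntegral α (fun y => u (exp y)) x := by
          simpa only [integral_log_div_rpow_mul_div_eq_rlIntegral α u hx.1]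
            using h _ (hexp_mem x hx)
      _ ≤ a t + b t * rlIntegral α (fun y => u (exp y)) x := by
          gcongr
          · exact ha_mono (hexp_mem x hx) ht (hexp_le x hx)
          · exact hb_mono (hexp_mem x hx) ht (hexp_le x hx)
  have := le_mul_tsum_mittagLefflerTerm hα hlog (hb_nonneg t ht)
    (hu_cont.comp continuous_exp.continuousOn hexp_mem) H
  rwa [Function.comp_apply, exp_log (by linarith [ht.1])] at this

theorem stmt_4 (α T : ℝ) (hα : 0 < α) (hT : 1 < T)
    (u a b : ℝ → ℝ)
    (hu_cont : ContinuousOn u (Ico 1 T)) (ha_cont : ContinuousOn a (Ico 1 T))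
    (hb_cont : ContinuousOn b (Ico 1 T))
    (hu_nonneg : ∀ t ∈ Ico (1:ℝ) T, 0 ≤ u t)
    (ha_nonneg : ∀ t ∈ Ico (1:ℝ) T, 0 ≤ a t)
    (hb_nonneg : ∀ t ∈ Ico (1:ℝ) T, 0 ≤ b t)
    (hb_bdd : BddAbove (b '' Ico 1 T))
    (hb_mono : MonotoneOn b (Ico 1 T))
    (ha_mono : MonotoneOn a (Ico 1 T))
    (h : ∀ t ∈ Ico (1:ℝ) T,
      u t ≤ a t + b t * ∫ s in (1:ℝ)..t, (Real.log (t / s)) ^ (α - 1) * u s / s) :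
    ∀ t ∈ Ico (1:ℝ) T,
      u t ≤ a t * ∑' k : ℕ,
        (b t * Real.Gamma α * (Real.log t) ^ α) ^ k / Real.Gamma (k * α + 1) :=
  stmt_4_general α T hα u a b hu_cont hu_nonneg hb_nonneg hb_mono ha_mono h
end

section
/- Let J = [1,T] with T > 1, α > 0, θ > 0, and let B = C(J, ℝⁿ) with supremum norm. Suppose I : B → B is an operator such that for all x, y ∈ B and all t ∈ J, ‖Ix(t) − Iy(t)‖ ≤ (θ/Γ(α)) ∫₁ᵗ (log(t/s))^{α−1} ‖x(s) − y(s)‖ ds/s. Then for every j ∈ ℕ, ‖I^j x(t) − I^j y(t)‖ ≤ (θ (log t)^α)^j / Γ(jα + 1) · ‖x − y‖_B for all t ∈ J. -/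
/-!
Induction on `j`. The substitution `u = log s` turns the kernel integral
`∫₁ᵗ (log (t/s))^(α-1) (log s)^(β-1) ds/s` into the Beta integral
`∫₀^(log t) (log t - u)^(α-1) u^(β-1) du = Γ(α)Γ(β)/Γ(α+β) · (log t)^(α+β-1)`.
Feeding in the bound for `I^j` with `β = jα + 1`, the factors `Γ(α)` and `Γ(jα+1)` cancel and
what remains is the bound for `I^(j+1)`.
-/

open Real MeasureTheory Set

theorem intervalIntegral_rpow_mul_sub_rpow {a b L : ℝ} (ha : 0 < a) (hb : 0 < b) (hL : 0 < L) :
    ∫ u in (0:ℝ)..L, u ^ (a - 1) * (L - u) ^ (b - 1)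
      = Gamma a * Gamma b / Gamma (a + b) * L ^ (a + b - 1) := by
  have hbeta := Complex.betaIntegral_scaled a b hL
  rw [Complex.betaIntegral_eq_Gamma_mul_div _ _ (by simpa) (by simpa)] at hbeta
  apply Complex.ofReal_injective
  rw [← intervalIntegral.integral_ofReal, intervalIntegral.integral_congr
    (g := fun u : ℝ => (u : ℂ) ^ ((a : ℂ) - 1) * ((L : ℂ) - u) ^ ((b : ℂ) - 1)) ?_]
  · rw [hbeta]
    push_cast
    rw [← Complex.ofReal_add, Complex.Gamma_ofReal, Complex.Gamma_ofReal, Complex.Gamma_ofReal,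
      Complex.ofReal_cpow hL.le]
    push_cast
    ring
  · intro u hu
    rw [uIcc_of_le hL.le] at hu
    push_cast
    rw [Complex.ofReal_cpow hu.1, Complex.ofReal_cpow (sub_nonneg.2 hu.2)]
    push_cast
    rfl

theorem intervalIntegral_comp_log_div {a b : ℝ} (ha : 0 < a) (hab : a ≤ b) (g : ℝ → ℝ) :
    ∫ s in a..b, g (log s) / s = ∫ u in log a..log b, g u := by
  have hderiv : ∀ s ∈ Ioc a b, HasDerivWithinAt log s⁻¹ (Ioc a b) s := fun s hs =>
    (hasDerivAt_log (ha.trans hs.1).ne').hasDerivWithinAt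
  have hinj : InjOn log (Ioc a b) := log_injOn_pos.mono fun s hs => ha.trans hs.1
  rw [intervalIntegral.integral_of_le hab, intervalIntegral.integral_of_le (log_le_log ha hab),
    ← image_log_Ioc ha hab,
    integral_image_eq_integral_abs_deriv_smul measurableSet_Ioc hderiv hinj]
  refine setIntegral_congr_fun measurableSet_Ioc fun s hs => ?_
  rw [abs_of_pos (inv_pos.2 (ha.trans hs.1)), smul_eq_mul, div_eq_inv_mul]

theorem intervalIntegral_log_div_rpow_mul_log_rpow {α β t : ℝ} (hα : 0 < α) (hβ : 0 < β)
    (ht : 1 < t) :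
    ∫ s in (1:ℝ)..t, log (t / s) ^ (α - 1) * log s ^ (β - 1) / s
      = Gamma α * Gamma β / Gamma (α + β) * log t ^ (α + β - 1) := by
  have hlog_div : ∀ s ∈ uIcc 1 t, log (t / s) ^ (α - 1) * log s ^ (β - 1) / s
      = (fun u => u ^ (β - 1) * (log t - u) ^ (α - 1)) (log s) / s := by
    intro s hs
    rw [uIcc_of_le ht.le] at hs
    rw [log_div (by linarith) (by linarith [hs.1]), mul_comm]
  rw [intervalIntegral.integral_congr hlog_div,
    intervalIntegral_comp_log_div one_pos ht.le (fun u => u ^ (β - 1) * (log t - u) ^ (α - 1)),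
    log_one, intervalIntegral_rpow_mul_sub_rpow hβ hα (log_pos ht), mul_comm (Gamma β),
    add_comm β]

theorem intervalIntegral_log_div_rpow_mul_le {α β t C : ℝ} {φ : ℝ → ℝ} (hα : 0 < α)
    (hβ : 0 < β) (ht : 1 < t) (hφ_nonneg : ∀ s ∈ Ioc 1 t, 0 ≤ φ s)
    (hφ_le : ∀ s ∈ Ioc 1 t, φ s ≤ C * log s ^ (β - 1)) :
    ∫ s in (1:ℝ)..t, log (t / s) ^ (α - 1) * φ s / s
      ≤ C * (Gamma α * Gamma β / Gamma (α + β) * log t ^ (α + β - 1)) := by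
  have hkernel := intervalIntegral_log_div_rpow_mul_log_rpow hα hβ ht
  -- the kernel is integrable because its integral is nonzero
  have hkernel_int : IntervalIntegrable
      (fun s => log (t / s) ^ (α - 1) * log s ^ (β - 1) / s) volume 1 t := by
    refine intervalIntegral.intervalIntegrable_of_integral_ne_zero ?_
    have := log_pos ht
    rw [hkernel]
    positivity
  rw [← hkernel, ← intervalIntegral.integral_const_mul, intervalIntegral.integral_of_le ht.le,
    intervalIntegral.integral_of_le ht.le]
  refine integral_mono_of_nonneg (ae_restrict_of_forall_mem measurableSet_Ioc fun s hs => ?_)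
    (hkernel_int.const_mul C).1 (ae_restrict_of_forall_mem measurableSet_Ioc fun s hs => ?_)
  all_goals
    have hs0 : 0 < s := one_pos.trans hs.1
    have := log_nonneg ((one_le_div hs0).2 hs.2)
  · have := hφ_nonneg s hs
    positivity
  · calc log (t / s) ^ (α - 1) * φ s / s
        ≤ log (t / s) ^ (α - 1) * (C * log s ^ (β - 1)) / s := by gcongr; exact hφ_le s hs
      _ = C * (log (t / s) ^ (α - 1) * log s ^ (β - 1) / s) := by ring

theorem mul_intervalIntegral_log_div_rpow_le {α θ M t : ℝ} {φ : ℝ → ℝ} (j : ℕ) (hα : 0 < α)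
    (hθ : 0 ≤ θ) (ht : 1 ≤ t) (hφ_nonneg : ∀ s ∈ Ioc 1 t, 0 ≤ φ s)
    (hφ_le : ∀ s ∈ Ioc 1 t, φ s ≤ (θ * log s ^ α) ^ j / Gamma (j * α + 1) * M) :
    θ / Gamma α * ∫ s in (1:ℝ)..t, log (t / s) ^ (α - 1) * φ s / s
      ≤ (θ * log t ^ α) ^ (j + 1) / Gamma ((j + 1 : ℕ) * α + 1) * M := by
  rcases ht.eq_or_lt with rfl | ht
  · simp [zero_rpow hα.ne']
  have hΓα : 0 < Gamma α := Gamma_pos_of_pos hα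
  have hΓ_jα : 0 < Gamma (j * α + 1) := Gamma_pos_of_pos (by positivity)
  have hφ_le' : ∀ s ∈ Ioc 1 t, φ s ≤ θ ^ j / Gamma (j * α + 1) * M * log s ^ (j * α + 1 - 1) := by
    intro s hs
    refine (hφ_le s hs).trans_eq ?_
    rw [add_sub_cancel_right, mul_comm (j : ℝ), rpow_mul_natCast (log_nonneg hs.1.le), mul_pow]
    ring
  have hpow : log t ^ (α + (j * α + 1) - 1) = (log t ^ α) ^ (j + 1) := by
    rw [← rpow_mul_natCast (log_nonneg ht.le)]
    congr 1
    push_cast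
    ring
  have hΓ : Gamma (α + (j * α + 1)) = Gamma ((j + 1 : ℕ) * α + 1) := by
    congr 1
    push_cast
    ring
  calc θ / Gamma α * ∫ s in (1:ℝ)..t, log (t / s) ^ (α - 1) * φ s / s
      ≤ θ / Gamma α * (θ ^ j / Gamma (j * α + 1) * M * (Gamma α * Gamma (j * α + 1)
          / Gamma (α + (j * α + 1)) * log t ^ (α + (j * α + 1) - 1))) := by
        gcongr
        exact intervalIntegral_log_div_rpow_mul_le hα (by positivity) ht hφ_nonneg hφ_le'
    _ = (θ * log t ^ α) ^ (j + 1) / Gamma ((j + 1 : ℕ) * α + 1) * M := by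
        rw [hpow, hΓ, mul_pow]
        field_simp
        ring

theorem stmt_6 (n : ℕ) (T α θ : ℝ) (hT : 1 < T) (hα : 0 < α) (hθ : 0 < θ)
    (I : C(Icc (1:ℝ) T, EuclideanSpace ℝ (Fin n)) → C(Icc (1:ℝ) T, EuclideanSpace ℝ (Fin n)))
    (h : ∀ x y : C(Icc (1:ℝ) T, EuclideanSpace ℝ (Fin n)), ∀ t : Icc (1:ℝ) T,
      ‖I x t - I y t‖ ≤ (θ / Real.Gamma α) * ∫ s in (1:ℝ)..(t:ℝ),
        (Real.log ((t:ℝ) / s)) ^ (α - 1)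
          * ‖x (Set.projIcc 1 T hT.le s) - y (Set.projIcc 1 T hT.le s)‖ / s) :
    ∀ j : ℕ, ∀ x y : C(Icc (1:ℝ) T, EuclideanSpace ℝ (Fin n)), ∀ t : Icc (1:ℝ) T,
      ‖(I^[j]) x t - (I^[j]) y t‖
        ≤ (θ * (Real.log (t:ℝ)) ^ α) ^ j / Real.Gamma (j * α + 1) * ‖x - y‖ := by
  intro j
  induction j with
  | zero =>
    intro x y t
    simpa using (x - y).norm_coe_le_norm t
  | succ j ih =>
    intro x y t
    rw [Function.iterate_succ_apply', Function.iterate_succ_apply']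
    refine (h _ _ t).trans <| mul_intervalIntegral_log_div_rpow_le j hα hθ.le t.2.1
      (fun s _ => norm_nonneg _) fun s hs => ?_
    rw [projIcc_of_mem hT.le ⟨hs.1.le, hs.2.trans t.2.2⟩]
    exact ih x y _
end

section
/- Let θ > 0, ε > 0, T > 1, α > 0, and let {x^j} be a sequence of continuous functions [1,T] → ℝⁿ satisfying ‖x^1(t) − x^0(t)‖ ≤ ε (log t)^α / Γ(α+1) and ‖x^{j+1}(t) − x^j(t)‖ ≤ (θ/Γ(α)) ∫₁ᵗ (log(t/s))^{α−1} ‖x^j(s) − x^{j−1}(s)‖ ds/s for all j ≥ 1 and t ∈ [1,T]. Then ‖x^j(t) − x^{j−1}(t)‖ ≤ (ε/θ) (θ(log t)^α)^j / Γ(jα+1) for all j ≥ 1 and t ∈ [1,T]. -/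
open Real MeasureTheory Set

/-!
Induction on `j`. The substitutions `s = exp u` and `u = (log t) v` turn the Hadamard integral of a
power of the logarithm into a Beta integral,
`∫₁ᵗ (log (t/s))^(α-1) (log s)^β ds/s = Γ(α) Γ(β+1) / Γ(α+β+1) · (log t)^(α+β)`,
so one step of the recursion with `β = jα` multiplies the bound by `θ (log t)^α` and replaces
`Γ(jα+1)` by `Γ((j+1)α+1)`.
-/

theorem integral_rpow_mul_one_sub_rpow_s9 {a b : ℝ} (ha : 0 < a) (hb : 0 < b) :
    ∫ v in (0:ℝ)..1, v ^ (a - 1) * (1 - v) ^ (b - 1) = Gamma a * Gamma b / Gamma (a + b) := by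
  have hbeta : Complex.betaIntegral a b = ↑(∫ v in (0:ℝ)..1, v ^ (a - 1) * (1 - v) ^ (b - 1)) := by
    rw [Complex.betaIntegral, ← intervalIntegral.integral_ofReal]
    refine intervalIntegral.integral_congr fun v hv => ?_
    rw [uIcc_of_le zero_le_one] at hv
    rw [Complex.ofReal_mul, Complex.ofReal_cpow hv.1, Complex.ofReal_cpow (by linarith [hv.2])]
    push_cast
    rfl
  have h := Complex.betaIntegral_eq_Gamma_mul_div a b (by simpa using ha) (by simpa using hb)
  rw [hbeta, ← Complex.ofReal_add, Complex.Gamma_ofReal, Complex.Gamma_ofReal,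
    Complex.Gamma_ofReal] at h
  exact_mod_cast h

theorem integral_sub_rpow_mul_rpow {α β L : ℝ} (hα : 0 < α) (hβ : 0 < β) (hL : 0 ≤ L) :
    ∫ u in (0:ℝ)..L, (L - u) ^ (α - 1) * u ^ β
      = Gamma α * Gamma (β + 1) / Gamma (α + β + 1) * L ^ (α + β) := by
  rcases hL.eq_or_lt with rfl | hL
  · simp [zero_rpow (add_pos hα hβ).ne']
  have hscale := intervalIntegral.smul_integral_comp_mul_left (a := 0) (b := 1)
    (fun u => (L - u) ^ (α - 1) * u ^ β) L
  have hfactor : ∫ v in (0:ℝ)..1, (L - L * v) ^ (α - 1) * (L * v) ^ β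
      = L ^ (α - 1 + β) * ∫ v in (0:ℝ)..1, v ^ (β + 1 - 1) * (1 - v) ^ (α - 1) := by
    rw [← intervalIntegral.integral_const_mul]
    refine intervalIntegral.integral_congr fun v hv => ?_
    rw [uIcc_of_le zero_le_one] at hv
    rw [show L - L * v = L * (1 - v) by ring, mul_rpow hL.le (by linarith [hv.2]),
      mul_rpow hL.le hv.1, add_sub_cancel_right, rpow_add hL]
    ring
  rw [mul_zero, mul_one] at hscale
  rw [← hscale, smul_eq_mul, hfactor, integral_rpow_mul_one_sub_rpow_s9 (by linarith) hα,
    show β + 1 + α = α + β + 1 by ring, ← mul_assoc, ← rpow_one_add' hL.le (by linarith),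
    show 1 + (α - 1 + β) = α + β by ring]
  ring

theorem integral_comp_log_div (g : ℝ → ℝ) {a b : ℝ} (ha : 0 < a) (hab : a ≤ b) :
    ∫ s in a..b, g (log s) / s = ∫ u in log a..log b, g u := by
  rw [intervalIntegral.integral_of_le hab, intervalIntegral.integral_of_le (log_le_log ha hab),
    ← image_log_Ioc ha hab, integral_image_eq_integral_abs_deriv_smul measurableSet_Ioc
      (fun s hs => (hasDerivAt_log (ha.trans hs.1).ne').hasDerivWithinAt) (log_injOn_pos.mono
        fun s hs => ha.trans hs.1)]
  refine setIntegral_congr_fun measurableSet_Ioc fun s hs => ?_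
  rw [smul_eq_mul, abs_of_pos (inv_pos.mpr (ha.trans hs.1)), div_eq_inv_mul]

theorem integral_log_div_rpow_mul_log_rpow_div {α β t : ℝ} (hα : 0 < α) (hβ : 0 < β) (ht : 1 ≤ t) :
    ∫ s in (1:ℝ)..t, log (t / s) ^ (α - 1) * log s ^ β / s
      = Gamma α * Gamma (β + 1) / Gamma (α + β + 1) * log t ^ (α + β) := by
  rw [← integral_sub_rpow_mul_rpow hα hβ (log_nonneg ht), ← log_one,
    ← integral_comp_log_div (fun u => (log t - u) ^ (α - 1) * u ^ β) one_pos ht]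
  refine intervalIntegral.integral_congr fun s hs => ?_
  rw [uIcc_of_le ht] at hs
  rw [log_div (by linarith) (by linarith [hs.1])]

theorem integral_log_div_rpow_mul_div_le {α β t C : ℝ} {f : ℝ → ℝ} (hα : 0 < α) (hβ : 0 < β)
    (ht : 1 ≤ t) (hf₀ : ∀ s ∈ Icc 1 t, 0 ≤ f s) (hf : ∀ s ∈ Icc 1 t, f s ≤ C * log s ^ β) :
    ∫ s in (1:ℝ)..t, log (t / s) ^ (α - 1) * f s / s
      ≤ C * (Gamma α * Gamma (β + 1) / Gamma (α + β + 1) * log t ^ (α + β)) := by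
  -- the kernel integral is positive for `t > 1`, hence the kernel is integrable
  have hint : IntervalIntegrable (fun s => log (t / s) ^ (α - 1) * log s ^ β / s) volume 1 t := by
    rcases ht.eq_or_lt with rfl | ht'
    · exact IntervalIntegrable.refl
    refine intervalIntegral.intervalIntegrable_of_integral_ne_zero ?_
    rw [integral_log_div_rpow_mul_log_rpow_div hα hβ ht]
    have := log_pos ht'
    positivity
  rw [← integral_log_div_rpow_mul_log_rpow_div hα hβ ht, ← intervalIntegral.integral_const_mul,
    intervalIntegral.integral_of_le ht, intervalIntegral.integral_of_le ht]
  have hK : ∀ s ∈ Ioc 1 t, 0 ≤ log (t / s) ^ (α - 1) / s := fun s hs =>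
    div_nonneg (rpow_nonneg (log_nonneg ((one_le_div₀ (by linarith [hs.1])).mpr hs.2)) _)
      (by linarith [hs.1])
  refine setIntegral_mono_of_nonneg (fun s hs => ?_) (fun s hs => ?_) (hint.const_mul C).1
  · rw [mul_div_right_comm]
    exact mul_nonneg (hK s hs) (hf₀ s (Ioc_subset_Icc_self hs))
  · rw [mul_div_right_comm, mul_div_right_comm, mul_left_comm]
    exact mul_le_mul_of_nonneg_left (hf s (Ioc_subset_Icc_self hs)) (hK s hs)

theorem mul_rpow_pow {θ L α : ℝ} (hL : 0 ≤ L) (k : ℕ) :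
    (θ * L ^ α) ^ k = θ ^ k * L ^ (k * α) := by
  rw [mul_pow, ← rpow_mul_natCast hL, mul_comm α]

theorem stmt_9_general (n : ℕ) (θ ε T α : ℝ) (hθ : 0 < θ) (hα : 0 < α)
    (x : ℕ → ℝ → EuclideanSpace ℝ (Fin n))
    (hbase : ∀ t ∈ Icc (1:ℝ) T,
      ‖x 1 t - x 0 t‖ ≤ ε * (Real.log t) ^ α / Real.Gamma (α + 1))
    (hrec : ∀ j : ℕ, 1 ≤ j → ∀ t ∈ Icc (1:ℝ) T,
      ‖x (j + 1) t - x j t‖ ≤ (θ / Real.Gamma α) *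
        ∫ s in (1:ℝ)..t, (Real.log (t / s)) ^ (α - 1) * ‖x j s - x (j - 1) s‖ / s) :
    ∀ j : ℕ, 1 ≤ j → ∀ t ∈ Icc (1:ℝ) T,
      ‖x j t - x (j - 1) t‖ ≤ (ε / θ) * (θ * (Real.log t) ^ α) ^ j / Real.Gamma (j * α + 1) := by
  intro j hj
  induction j, hj using Nat.le_induction with
  | base =>
    intro t ht
    convert hbase t ht using 1
    field_simp
    simp
  | succ j hj ih =>
    intro t ht
    set C := ε / θ * θ ^ j / Gamma (j * α + 1) with hC
    have hΓα := Gamma_pos_of_pos hα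
    have hΓj := Gamma_pos_of_pos (by positivity : 0 < (j : ℝ) * α + 1)
    have hih : ∀ s ∈ Icc 1 t, ‖x j s - x (j - 1) s‖ ≤ C * log s ^ ((j : ℝ) * α) := fun s hs => by
      have := ih s ⟨hs.1, hs.2.trans ht.2⟩
      rwa [mul_rpow_pow (log_nonneg hs.1), ← mul_assoc, mul_div_right_comm] at this
    calc ‖x (j + 1) t - x (j + 1 - 1) t‖
        ≤ θ / Gamma α * (C * (Gamma α * Gamma (j * α + 1) / Gamma (α + j * α + 1)
            * log t ^ (α + j * α))) :=
          (hrec j hj t ht).trans <| mul_le_mul_of_nonneg_left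
            (integral_log_div_rpow_mul_div_le hα (by positivity) ht.1
              (fun s _ => norm_nonneg _) hih) (by positivity)
      _ = ε / θ * (θ * log t ^ α) ^ (j + 1) / Gamma ((j + 1 : ℕ) * α + 1) := by
          rw [hC, mul_rpow_pow (log_nonneg ht.1), show ((j + 1 : ℕ) : ℝ) * α = α + j * α by
            push_cast; ring]
          field_simp
          ring

theorem stmt_9 (n : ℕ) (θ ε T α : ℝ) (hθ : 0 < θ) (hε : 0 < ε) (hT : 1 < T) (hα : 0 < α)
    (x : ℕ → ℝ → EuclideanSpace ℝ (Fin n))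
    (hx_cont : ∀ j, ContinuousOn (x j) (Icc 1 T))
    (hbase : ∀ t ∈ Icc (1:ℝ) T,
      ‖x 1 t - x 0 t‖ ≤ ε * (Real.log t) ^ α / Real.Gamma (α + 1))
    (hrec : ∀ j : ℕ, 1 ≤ j → ∀ t ∈ Icc (1:ℝ) T,
      ‖x (j + 1) t - x j t‖ ≤ (θ / Real.Gamma α) *
        ∫ s in (1:ℝ)..t, (Real.log (t / s)) ^ (α - 1) * ‖x j s - x (j - 1) s‖ / s) :
    ∀ j : ℕ, 1 ≤ j → ∀ t ∈ Icc (1:ℝ) T,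
      ‖x j t - x (j - 1) t‖ ≤ (ε / θ) * (θ * (Real.log t) ^ α) ^ j / Real.Gamma (j * α + 1) :=
  stmt_9_general n θ ε T α hθ hα x hbase hrec
end
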